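/- Let M_L = [[1,1],[0,1]] and M_R = [[1,0],[1,1]]. Suppose ℓ, ℓ' ≥ 1 and m_1, n_1, …, m_ℓ, n_ℓ and m'_1, n'_1, …, m'_{ℓ'}, n'_{ℓ'} are positive integers such that the products W = M_L^{m_1} · M_R^{n_1} · ⋯ · M_L^{m_ℓ} · M_R^{n_ℓ} and W' = M_L^{m'_1} · M_R^{n'_1} · ⋯ · M_L^{m'_{ℓ'}} · M_R^{n'_{ℓ'}} are conjugate in SL(2,ℤ). Then ℓ = ℓ' and the sequence of pairs ((m'_1, n'_1), …, (m'_ℓ, n'_ℓ)) is obtained from ((m_1, n_1), …, (m_ℓ, n_ℓ)) by a cyclic rotation. -/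

import Mathlib

open Matrix

/-- The matrix with rows (1,1) and (0,1). -/
def ML : Matrix (Fin 2) (Fin 2) ℤ := !![1, 1; 0, 1]

/-- The matrix with rows (1,0) and (1,1). -/
def MR : Matrix (Fin 2) (Fin 2) ℤ := !![1, 0; 1, 1]

/-!
A positive word `W = L^{m₁} R^{n₁} ⋯ L^{m_ℓ} R^{n_ℓ}` has all entries `≥ 1` and determinant `1`.
Such a matrix maps a vector of the closed second or fourth quadrant only from a vector of the
same quadrant with at least twice its `ℓ¹`-norm, so its powers push every nonzero integer vector
into the open first or third quadrant. Hence if `P W P⁻¹ = W'`, the conjugator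
`Q = W'^N P = P W^N` is, for large `N`, up to sign a nonnegative matrix of `SL(2, ℤ)`, that is,
a word in `L` and `R`; these matrices form the free monoid on `L` and `R`. So `Q W = W' Q` holds
in the free monoid, which forces `W' = s t` and `W = t s`. Since `W` begins with `L` and ends
with `R`, the cut between `s` and `t` falls between two blocks `L^m R^n`.
-/

theorem List.exists_swap_of_append_eq_append {α : Type*} {x y v : List α}
    (h : y ++ v = v ++ x) : ∃ s t, y = s ++ t ∧ x = t ++ s := by
  induction hn : v.length using Nat.strong_induction_on generalizing v with
  | _ n ih =>
  rcases List.append_eq_append_iff.mp h with ⟨a, hv, hv'⟩ | ⟨c, hy, hx⟩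
  · rcases eq_or_ne y [] with rfl | hy
    · refine ⟨[], [], rfl, ?_⟩
      simpa [hv'] using hv
    · refine ih a.length ?_ (hv ▸ hv') rfl
      rw [← hn, hv, List.length_append]
      have := List.length_pos_iff.mpr hy
      omega
  · exact ⟨v, c, hy, hx⟩

section EntrywisePositive

variable {l m n R : Type*} [Fintype m] [Semiring R] [PartialOrder R]

lemma Matrix.mul_apply_nonneg [IsOrderedRing R] {M : Matrix l m R} {N : Matrix m n R}
    (hM : ∀ i j, 0 ≤ M i j) (hN : ∀ i j, 0 ≤ N i j) (i : l) (k : n) : 0 ≤ (M * N) i k :=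
  Finset.sum_nonneg fun j _ => mul_nonneg (hM i j) (hN j k)

lemma Matrix.mul_apply_pos [IsStrictOrderedRing R] [Nonempty m] {M : Matrix l m R}
    {N : Matrix m n R} (hM : ∀ i j, 0 < M i j) (hN : ∀ i j, 0 < N i j) (i : l) (k : n) :
    0 < (M * N) i k :=
  Finset.sum_pos (fun j _ => mul_pos (hM i j) (hN j k)) Finset.univ_nonempty

lemma Matrix.list_prod_apply_pos [IsStrictOrderedRing R] [Nonempty m] [DecidableEq m]
    {L : List (Matrix m m R)} (hL : L ≠ []) (h : ∀ M ∈ L, ∀ i j, 0 < M i j) (i j : m) :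
    0 < L.prod i j := by
  induction L generalizing i j with
  | nil => exact absurd rfl hL
  | cons M L ih =>
    rcases eq_or_ne L [] with rfl | hL'
    · simpa using h M (by simp) i j
    · rw [List.prod_cons]
      exact Matrix.mul_apply_pos (h M (by simp)) (ih hL' fun N hN => h N (by simp [hN])) i j

end EntrywisePositive

lemma Matrix.entries_pos_or_neg {R : Type*} [Ring R] [LinearOrder R] [IsStrictOrderedRing R]
    {Q : Matrix (Fin 2) (Fin 2) R} (h₀ : 0 < Q 0 0 * Q 1 0) (h₁ : 0 < Q 0 1 * Q 1 1)
    (h₂ : 0 < Q 0 0 * Q 0 1) : (∀ i j, 0 < Q i j) ∨ (∀ i j, Q i j < 0) := by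
  rcases pos_and_pos_or_neg_and_neg_of_mul_pos h₂ with ⟨ha, hb⟩ | ⟨ha, hb⟩
  · left
    have hc := (pos_iff_pos_of_mul_pos h₀).mp ha
    have hd := (pos_iff_pos_of_mul_pos h₁).mp hb
    intro i j; fin_cases i <;> fin_cases j <;> assumption
  · right
    have hc := (neg_iff_neg_of_mul_pos h₀).mp ha
    have hd := (neg_iff_neg_of_mul_pos h₁).mp hb
    intro i j; fin_cases i <;> fin_cases j <;> assumption

lemma Matrix.column_ne_zero_of_det_eq_one {R : Type*} [CommRing R] [Nontrivial R]
    {M : Matrix (Fin 2) (Fin 2) R} (hM : M.det = 1) (j : Fin 2) : (fun i => M i j) ≠ 0 := by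
  intro h
  have h₀ := congrFun h 0
  have h₁ := congrFun h 1
  rw [det_fin_two] at hM
  fin_cases j <;> simp_all

/-- `L ^ p.1 * R ^ p.2`, with `true` for `L` and `false` for `R`. -/
def lrBlock (p : ℕ × ℕ) : List Bool := List.replicate p.1 true ++ List.replicate p.2 false

def lrWord (ps : List (ℕ × ℕ)) : List Bool := ps.flatMap lrBlock

def PosPairs (ps : List (ℕ × ℕ)) : Prop := ∀ p ∈ ps, 0 < p.1 ∧ 0 < p.2

@[simp] lemma lrWord_nil : lrWord [] = [] := rfl

@[simp] lemma lrWord_cons (p : ℕ × ℕ) (ps : List (ℕ × ℕ)) :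
    lrWord (p :: ps) = lrBlock p ++ lrWord ps := rfl

lemma lrWord_append (ps qs : List (ℕ × ℕ)) : lrWord (ps ++ qs) = lrWord ps ++ lrWord qs :=
  List.flatMap_append

lemma PosPairs.of_cons {p : ℕ × ℕ} {ps : List (ℕ × ℕ)} (h : PosPairs (p :: ps)) : PosPairs ps :=
  fun q hq => h q (List.mem_cons_of_mem p hq)

lemma PosPairs.append_iff {ps qs : List (ℕ × ℕ)} :
    PosPairs (ps ++ qs) ↔ PosPairs ps ∧ PosPairs qs :=
  List.forall_mem_append

lemma posPairs_ofFn {k : ℕ} {m n : Fin k → ℕ} (hm : ∀ i, 0 < m i) (hn : ∀ i, 0 < n i) :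
    PosPairs (List.ofFn fun i => (m i, n i)) := by
  simp [PosPairs, List.mem_ofFn, hm, hn]

lemma lrBlock_pairwise_ge (p : ℕ × ℕ) : (lrBlock p).Pairwise (· ≥ ·) := by
  simp [lrBlock, List.pairwise_append, List.pairwise_replicate]

lemma lrBlock_ne_append (p : ℕ × ℕ) {s u : List Bool} (hs : s ≠ []) (hu : u ≠ [])
    (hs' : s.getLast? ≠ some true) (hu' : u.head? ≠ some false) : lrBlock p ≠ s ++ u := by
  intro h
  have hle := List.pairwise_append.mp (h ▸ lrBlock_pairwise_ge p) |>.2.2 _ (s.getLast_mem hs) _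
    (u.head_mem hu)
  rw [List.getLast?_eq_some_getLast hs] at hs'
  rw [List.head?_eq_some_head hu] at hu'
  revert hle hs' hu'
  cases s.getLast hs <;> cases u.head hu <;> decide

lemma lrBlock_injective : Function.Injective lrBlock := by
  intro p q h
  have h₁ := congrArg (List.count true) h
  have h₂ := congrArg (List.count false) h
  simp [lrBlock, List.count_replicate] at h₁ h₂
  exact Prod.ext h₁ h₂

lemma lrBlock_head? {p : ℕ × ℕ} (hp : 0 < p.1) : (lrBlock p).head? = some true := by
  simp [lrBlock, List.head?_append, List.head?_replicate, hp.ne']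

lemma lrBlock_getLast? {p : ℕ × ℕ} (hp : 0 < p.2) : (lrBlock p).getLast? = some false := by
  simp [lrBlock, List.getLast?_append, List.getLast?_replicate, hp.ne']

lemma lrWord_head?_ne_some_false {ps : List (ℕ × ℕ)} (hps : PosPairs ps) :
    (lrWord ps).head? ≠ some false := by
  cases ps with
  | nil => simp
  | cons p ps => simp [List.head?_append, lrBlock_head? (hps p (by simp)).1]

lemma lrWord_getLast?_ne_some_true {ps : List (ℕ × ℕ)} (hps : PosPairs ps) :
    (lrWord ps).getLast? ≠ some true := by
  induction ps with
  | nil => simp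
  | cons p ps ih =>
    rw [lrWord_cons, List.getLast?_append]
    cases h : (lrWord ps).getLast? with
    | none => simp [lrBlock_getLast? (hps p (by simp)).2]
    | some b => simpa [h] using ih hps.of_cons

lemma lrWord_eq_nil_iff {ps : List (ℕ × ℕ)} (hps : PosPairs ps) : lrWord ps = [] ↔ ps = [] := by
  cases ps with
  | nil => simp
  | cons p ps =>
    have := (hps p (by simp)).1
    simp [lrBlock]
    omega

theorem exists_eq_append_of_lrWord_eq_append {ps : List (ℕ × ℕ)} {s t : List Bool}
    (h : lrWord ps = s ++ t) (hs : s.getLast? ≠ some true) (ht : t.head? ≠ some false) :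
    ∃ ps₁ ps₂, ps = ps₁ ++ ps₂ ∧ s = lrWord ps₁ ∧ t = lrWord ps₂ := by
  induction ps generalizing s with
  | nil =>
    obtain ⟨rfl, rfl⟩ := List.append_eq_nil_iff.mp h.symm
    exact ⟨[], [], rfl, rfl, rfl⟩
  | cons p ps ih =>
    rw [lrWord_cons] at h
    rcases List.append_eq_append_iff.mp h with ⟨a, rfl, ha⟩ | ⟨c, hp, rfl⟩
    · have ha' : a.getLast? ≠ some true := fun ha =>
        hs (by simp [List.getLast?_append, ha])
      obtain ⟨ps₁, ps₂, rfl, rfl, rfl⟩ := ih ha ha'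
      exact ⟨p :: ps₁, ps₂, rfl, rfl, rfl⟩
    · rcases eq_or_ne s [] with rfl | hs₀
      · exact ⟨[], p :: ps, rfl, rfl, by simp [hp]⟩
      rcases eq_or_ne c [] with rfl | hc₀
      · exact ⟨[p], ps, rfl, by simpa using hp.symm, rfl⟩
      exact absurd hp (lrBlock_ne_append p hs₀ hc₀ hs (by simpa [List.head?_append, hc₀] using ht))

lemma eq_singleton_of_lrWord_eq_lrBlock {ps : List (ℕ × ℕ)} {p : ℕ × ℕ} (hps : PosPairs ps)
    (hp : 0 < p.1) (h : lrWord ps = lrBlock p) : ps = [p] := by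
  rcases ps with _ | ⟨q, qs⟩
  · simp [lrBlock] at h; omega
  rcases eq_or_ne qs [] with rfl | hqs
  · simpa using lrBlock_injective (by simpa using h)
  have hq := hps q (by simp)
  refine absurd h.symm (lrBlock_ne_append p ?_ ?_ ?_ (lrWord_head?_ne_some_false hps.of_cons))
  · simp [lrBlock, hq.1.ne']
  · exact (lrWord_eq_nil_iff hps.of_cons).not.mpr hqs
  · simp [lrBlock_getLast? hq.2]

theorem eq_of_lrWord_eq {ps qs : List (ℕ × ℕ)} (hps : PosPairs ps) (hqs : PosPairs qs)
    (h : lrWord ps = lrWord qs) : ps = qs := by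
  induction ps generalizing qs with
  | nil => exact ((lrWord_eq_nil_iff hqs).mp h.symm).symm
  | cons p ps ih =>
    have hp := hps p (by simp)
    obtain ⟨qs₁, qs₂, rfl, h₁, h₂⟩ := exists_eq_append_of_lrWord_eq_append h.symm
      (by simp [lrBlock_getLast? hp.2]) (lrWord_head?_ne_some_false hps.of_cons)
    rw [PosPairs.append_iff] at hqs
    rw [eq_singleton_of_lrWord_eq_lrBlock hqs.1 hp.1 h₁.symm, ih hps.of_cons hqs.2 h₂]
    rfl

theorem isRotated_of_lrWord_append_eq {xs ys : List (ℕ × ℕ)} (hxs : PosPairs xs)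
    (hys : PosPairs ys) {v : List Bool} (h : lrWord ys ++ v = v ++ lrWord xs) : xs ~r ys := by
  obtain ⟨s, t, hy, hx⟩ := List.exists_swap_of_append_eq_append h
  have hs : s.getLast? ≠ some true := fun hs =>
    lrWord_getLast?_ne_some_true hxs (by simp [hx, List.getLast?_append, hs])
  have ht : t.head? ≠ some false := fun ht =>
    lrWord_head?_ne_some_false hxs (by simp [hx, List.head?_append, ht])
  obtain ⟨ys₁, ys₂, rfl, rfl, rfl⟩ := exists_eq_append_of_lrWord_eq_append hy hs ht
  rw [PosPairs.append_iff] at hys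
  rw [eq_of_lrWord_eq hxs (PosPairs.append_iff.mpr hys.symm) (by rw [hx, lrWord_append])]
  exact List.isRotated_append

lemma ML_pow (k : ℕ) : ML ^ k = !![1, (k : ℤ); 0, 1] := by
  induction k with
  | zero => simp [one_fin_two]
  | succ k ih => rw [pow_succ, ih]; simp [ML, add_comm]

lemma MR_pow (k : ℕ) : MR ^ k = !![1, 0; (k : ℤ), 1] := by
  induction k with
  | zero => simp [one_fin_two]
  | succ k ih => rw [pow_succ, ih]; simp [MR]

lemma ML_pow_mul_MR_pow_pos {a b : ℕ} (ha : 0 < a) (hb : 0 < b) (i j : Fin 2) :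
    0 < (ML ^ a * MR ^ b) i j := by
  fin_cases i <;> fin_cases j <;> simp [ML_pow, MR_pow] <;> positivity

def lrLetter : Bool → Matrix (Fin 2) (Fin 2) ℤ
  | true => ML
  | false => MR

def lrEval (w : List Bool) : Matrix (Fin 2) (Fin 2) ℤ := (w.map lrLetter).prod

@[simp] lemma lrEval_nil : lrEval [] = 1 := rfl

@[simp] lemma lrEval_cons (b : Bool) (w : List Bool) : lrEval (b :: w) = lrLetter b * lrEval w :=
  List.prod_cons

lemma lrEval_append (u v : List Bool) : lrEval (u ++ v) = lrEval u * lrEval v := by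
  simp [lrEval]

lemma lrEval_lrWord (ps : List (ℕ × ℕ)) :
    lrEval (lrWord ps) = (ps.map fun p => ML ^ p.1 * MR ^ p.2).prod := by
  induction ps with
  | nil => rfl
  | cons p ps ih =>
    rw [lrWord_cons, lrEval_append, ih, List.map_cons, List.prod_cons]
    simp [lrBlock, lrEval, lrLetter]

lemma det_lrLetter (b : Bool) : (lrLetter b).det = 1 := by
  cases b <;> simp [lrLetter, ML, MR, det_fin_two_of]

lemma det_lrEval (w : List Bool) : (lrEval w).det = 1 := by
  induction w with
  | nil => simp
  | cons b w ih => simp [det_mul, det_lrLetter, ih]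

lemma lrEval_nonneg (w : List Bool) (i j : Fin 2) : 0 ≤ lrEval w i j := by
  induction w generalizing i j with
  | nil => fin_cases i <;> fin_cases j <;> simp
  | cons b w ih =>
    refine Matrix.mul_apply_nonneg (fun i j => ?_) ih i j
    cases b <;> fin_cases i <;> fin_cases j <;> simp [lrLetter, ML, MR]

lemma exists_lrLetter_mul_eq {M : Matrix (Fin 2) (Fin 2) ℤ} (hM : ∀ i j, 0 ≤ M i j)
    (hdet : M.det = 1) (hM₁ : M ≠ 1) : ∃ b M', M = lrLetter b * M' ∧ (∀ i j, 0 ≤ M' i j) ∧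
      M'.det = 1 ∧ ∑ i, ∑ j, M' i j < ∑ i, ∑ j, M i j := by
  rw [det_fin_two] at hdet
  have := hM 0 0; have := hM 0 1; have := hM 1 0; have := hM 1 1
  by_cases hL : M 1 0 ≤ M 0 0 ∧ M 1 1 ≤ M 0 1
  · refine ⟨true, !![M 0 0 - M 1 0, M 0 1 - M 1 1; M 1 0, M 1 1], ?_, ?_, ?_, ?_⟩
    · ext i j; fin_cases i <;> fin_cases j <;> simp [lrLetter, ML]
    · intro i j; fin_cases i <;> fin_cases j <;> simp <;> omega
    · rw [det_fin_two_of]; linear_combination hdet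
    · simp [Fin.sum_univ_two]
      by_contra!
      nlinarith
  by_cases hR : M 0 0 ≤ M 1 0 ∧ M 0 1 ≤ M 1 1
  · refine ⟨false, !![M 0 0, M 0 1; M 1 0 - M 0 0, M 1 1 - M 0 1], ?_, ?_, ?_, ?_⟩
    · ext i j; fin_cases i <;> fin_cases j <;> simp [lrLetter, MR]
    · intro i j; fin_cases i <;> fin_cases j <;> simp <;> omega
    · rw [det_fin_two_of]; linear_combination hdet
    · simp [Fin.sum_univ_two]
      by_contra!
      nlinarith
  -- if neither row dominates the other, `det M = 1` forces `M = 1`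
  simp only [not_and, not_le] at hL hR
  have hM : M 0 1 = 0 ∧ M 1 0 = 0 ∧ M 0 0 = 1 ∧ M 1 1 = 1 := by
    rcases lt_or_ge (M 1 0) (M 0 0) with hc | hc
    · have hb := hL hc.le
      have : M 0 1 = 0 ∧ M 1 0 = 0 := by constructor <;> nlinarith
      refine ⟨this.1, this.2, ?_⟩
      rw [this.1, this.2] at hdet
      constructor <;> nlinarith
    · have hb := hR hc
      nlinarith [hL]
  exact absurd (by ext i j; fin_cases i <;> fin_cases j <;> simp [hM]) hM₁

theorem exists_lrEval_eq {M : Matrix (Fin 2) (Fin 2) ℤ} (hM : ∀ i j, 0 ≤ M i j)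
    (hdet : M.det = 1) : ∃ w, lrEval w = M := by
  induction hn : (∑ i, ∑ j, M i j).toNat using Nat.strong_induction_on generalizing M with
  | _ n ih =>
  by_cases hM₁ : M = 1
  · exact ⟨[], hM₁.symm⟩
  obtain ⟨b, M', rfl, hM', hdet', hlt⟩ := exists_lrLetter_mul_eq hM hdet hM₁
  have : 0 ≤ ∑ i, ∑ j, M' i j := Finset.sum_nonneg fun i _ => Finset.sum_nonneg fun j _ => hM' i j
  obtain ⟨w, rfl⟩ := ih _ (by omega) hM' hdet' rfl
  exact ⟨b :: w, rfl⟩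

/-- The sign of `rowSumGap (lrEval w)` is the first letter of `w`: `L` adds the second row to the
first, `R` the first row to the second. -/
def rowSumGap (M : Matrix (Fin 2) (Fin 2) ℤ) : ℤ := M 0 0 + M 0 1 - (M 1 0 + M 1 1)

lemma row_sum_pos_of_nonneg {M : Matrix (Fin 2) (Fin 2) ℤ} (hM : ∀ i j, 0 ≤ M i j)
    (hdet : M.det = 1) (i : Fin 2) : 0 < M i 0 + M i 1 := by
  rw [det_fin_two] at hdet
  have := hM 0 0; have := hM 0 1; have := hM 1 0; have := hM 1 1
  by_contra!
  fin_cases i <;> simp at this <;> nlinarith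

lemma rowSumGap_lrEval_true_cons_pos (w : List Bool) : 0 < rowSumGap (lrEval (true :: w)) := by
  have := row_sum_pos_of_nonneg (lrEval_nonneg w) (det_lrEval w) 0
  simp [rowSumGap, lrLetter, ML, mul_apply, Fin.sum_univ_two]
  linarith

lemma rowSumGap_lrEval_false_cons_neg (w : List Bool) : rowSumGap (lrEval (false :: w)) < 0 := by
  have := row_sum_pos_of_nonneg (lrEval_nonneg w) (det_lrEval w) 1
  simp [rowSumGap, lrLetter, MR, mul_apply, Fin.sum_univ_two]
  linarith

theorem lrEval_injective : Function.Injective lrEval := by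
  have gap_ne_zero (b : Bool) (w : List Bool) : rowSumGap (lrEval (b :: w)) ≠ 0 := by
    cases b
    · exact (rowSumGap_lrEval_false_cons_neg w).ne
    · exact (rowSumGap_lrEval_true_cons_pos w).ne'
  have gap_one : rowSumGap (lrEval []) = 0 := by simp [rowSumGap]
  intro u
  induction u with
  | nil =>
    rintro (_ | ⟨b, v⟩) h
    · rfl
    · exact absurd (h ▸ gap_one) (gap_ne_zero b v)
  | cons a u ih =>
    rintro (_ | ⟨b, v⟩) h
    · exact absurd (h ▸ gap_one) (gap_ne_zero a u)
    obtain rfl : a = b := by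
      have := congrArg rowSumGap h
      cases a <;> cases b
      all_goals first
        | rfl
        | linarith [rowSumGap_lrEval_true_cons_pos u, rowSumGap_lrEval_false_cons_neg u,
            rowSumGap_lrEval_true_cons_pos v, rowSumGap_lrEval_false_cons_neg v]
    rw [lrEval_cons, lrEval_cons] at h
    rw [ih (((isUnit_iff_isUnit_det _).mpr (by simp [det_lrLetter])).mul_left_cancel h)]

lemma prod_ofFn_eq_lrEval_lrWord {k : ℕ} (m n : Fin k → ℕ) :
    (List.ofFn fun i => ML ^ m i * MR ^ n i).prod =
      lrEval (lrWord (List.ofFn fun i => (m i, n i))) := by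
  rw [lrEval_lrWord, List.map_ofFn]
  rfl

lemma lrEval_lrWord_pos {ps : List (ℕ × ℕ)} (hps : PosPairs ps) (hne : ps ≠ []) (i j : Fin 2) :
    0 < lrEval (lrWord ps) i j := by
  rw [lrEval_lrWord]
  refine list_prod_apply_pos (by simpa using hne) (fun M hM => ?_) i j
  obtain ⟨p, hp, rfl⟩ := List.mem_map.mp hM
  exact ML_pow_mul_MR_pow_pos (hps p hp).1 (hps p hp).2

section Dynamics

variable {B : Matrix (Fin 2) (Fin 2) ℤ}

/-- `B⁻¹` maps the closed second and fourth quadrants into themselves, at least doubling the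
`ℓ¹`-norm. -/
lemma mul_nonpos_and_two_mul_le_of_mulVec_mul_nonpos (hB : ∀ i j, 0 < B i j) (hdet : B.det = 1)
    {v : Fin 2 → ℤ} (h : (B *ᵥ v) 0 * (B *ᵥ v) 1 ≤ 0) :
    v 0 * v 1 ≤ 0 ∧ 2 * (|(B *ᵥ v) 0| + |(B *ᵥ v) 1|) ≤ |v 0| + |v 1| := by
  set u := B *ᵥ v with hu
  rw [det_fin_two] at hdet
  have hu₀ : u 0 = B 0 0 * v 0 + B 0 1 * v 1 := by simp only [hu, mulVec, vec2_dotProduct]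
  have hu₁ : u 1 = B 1 0 * v 0 + B 1 1 * v 1 := by simp only [hu, mulVec, vec2_dotProduct]
  have hv₀ : v 0 = B 1 1 * u 0 - B 0 1 * u 1 := by rw [hu₀, hu₁]; linear_combination -v 0 * hdet
  have hv₁ : v 1 = B 0 0 * u 1 - B 1 0 * u 0 := by rw [hu₀, hu₁]; linear_combination -v 1 * hdet
  have := hB 0 0; have := hB 0 1; have := hB 1 0; have := hB 1 1
  rcases Int.mul_nonpos_iff.mp h with ⟨h₀, h₁⟩ | ⟨h₀, h₁⟩
  · have hv₀' : 0 ≤ v 0 := by nlinarith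
    have hv₁' : v 1 ≤ 0 := by nlinarith
    refine ⟨mul_nonpos_of_nonneg_of_nonpos hv₀' hv₁', ?_⟩
    rw [abs_of_nonneg h₀, abs_of_nonpos h₁, abs_of_nonneg hv₀', abs_of_nonpos hv₁']
    nlinarith
  · have hv₀' : v 0 ≤ 0 := by nlinarith
    have hv₁' : 0 ≤ v 1 := by nlinarith
    refine ⟨mul_nonpos_of_nonpos_of_nonneg hv₀' hv₁', ?_⟩
    rw [abs_of_nonpos h₀, abs_of_nonneg h₁, abs_of_nonpos hv₀', abs_of_nonneg hv₁']
    nlinarith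

lemma two_pow_mul_le_of_pow_mulVec_mul_nonpos (hB : ∀ i j, 0 < B i j) (hdet : B.det = 1)
    {v : Fin 2 → ℤ} {N : ℕ} (h : (B ^ N *ᵥ v) 0 * (B ^ N *ᵥ v) 1 ≤ 0) :
    2 ^ N * (|(B ^ N *ᵥ v) 0| + |(B ^ N *ᵥ v) 1|) ≤ |v 0| + |v 1| := by
  induction N with
  | zero => simp
  | succ N ih =>
    rw [pow_succ' B N, ← mulVec_mulVec] at h ⊢
    obtain ⟨hmixed, hle⟩ := mul_nonpos_and_two_mul_le_of_mulVec_mul_nonpos hB hdet h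
    calc 2 ^ (N + 1) * (|(B *ᵥ (B ^ N *ᵥ v)) 0| + |(B *ᵥ (B ^ N *ᵥ v)) 1|)
        = 2 ^ N * (2 * (|(B *ᵥ (B ^ N *ᵥ v)) 0| + |(B *ᵥ (B ^ N *ᵥ v)) 1|)) := by ring
      _ ≤ 2 ^ N * (|(B ^ N *ᵥ v) 0| + |(B ^ N *ᵥ v) 1|) := by gcongr
      _ ≤ |v 0| + |v 1| := ih hmixed

theorem eventually_pow_mulVec_mul_pos (hB : ∀ i j, 0 < B i j) (hdet : B.det = 1)
    {v : Fin 2 → ℤ} (hv : v ≠ 0) :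
    ∀ᶠ N in Filter.atTop, 0 < (B ^ N *ᵥ v) 0 * (B ^ N *ᵥ v) 1 := by
  filter_upwards [(tendsto_pow_atTop_atTop_of_one_lt (one_lt_two (α := ℤ))).eventually_gt_atTop
    (|v 0| + |v 1|)] with N hN
  by_contra! hmixed
  have hle := two_pow_mul_le_of_pow_mulVec_mul_nonpos hB hdet hmixed
  have hne : B ^ N *ᵥ v ≠ 0 := fun h₀ =>
    hv (eq_zero_of_mulVec_eq_zero (by simp [det_pow, hdet]) h₀)
  set w := B ^ N *ᵥ v
  have hw : 1 ≤ |w 0| + |w 1| := by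
    obtain ⟨i, hi⟩ := Function.ne_iff.mp hne
    fin_cases i <;> simp only [Fin.zero_eta, Fin.mk_one, Pi.zero_apply] at hi
    · linarith [Int.one_le_abs hi, abs_nonneg (w 1)]
    · linarith [Int.one_le_abs hi, abs_nonneg (w 0)]
  linarith [le_mul_of_one_le_right (by positivity : (0 : ℤ) ≤ 2 ^ N) hw]

end Dynamics

/-- If `P` conjugates `A` to `B`, then so does `Q = B ^ N * P = P * A ^ N`, and for large `N`
the columns and rows of `Q` all lie in the open first or third quadrant. -/
theorem exists_nonneg_semiconj {A B P : Matrix (Fin 2) (Fin 2) ℤ} (hA : ∀ i j, 0 < A i j)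
    (hdetA : A.det = 1) (hB : ∀ i j, 0 < B i j) (hdetB : B.det = 1) (hP : P.det = 1)
    (h : P * A = B * P) : ∃ C : Matrix (Fin 2) (Fin 2) ℤ,
      (∀ i j, 0 ≤ C i j) ∧ C.det = 1 ∧ C * A = B * C := by
  have hcol j := eventually_pow_mulVec_mul_pos hB hdetB (column_ne_zero_of_det_eq_one hP j)
  have hrow := eventually_pow_mulVec_mul_pos (B := Aᵀ) (fun i j => hA j i)
    (by rwa [det_transpose]) (column_ne_zero_of_det_eq_one (M := Pᵀ) (by rwa [det_transpose]) 0)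
  obtain ⟨N, h₀, h₁, h₂⟩ := ((hcol 0).and ((hcol 1).and hrow)).exists
  set Q := B ^ N * P
  have hPQ : P * A ^ N = Q := SemiconjBy.pow_right h N
  have hQA : Q * A = B * Q := by rw [mul_assoc, h, ← mul_assoc, ← pow_succ, pow_succ', mul_assoc]
  have hdetQ : Q.det = 1 := by rw [det_mul, det_pow, hdetB, hP, one_pow, one_mul]
  rw [← transpose_pow, mulVec_transpose] at h₂
  rcases entries_pos_or_neg (Q := Q) h₀ h₁ (by rw [← hPQ]; exact h₂) with hpos | hneg
  · exact ⟨Q, fun i j => (hpos i j).le, hdetQ, hQA⟩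
  · refine ⟨-Q, fun i j => (neg_pos.mpr (hneg i j)).le, by simp [det_neg, hdetQ], ?_⟩
    rw [neg_mul, mul_neg, hQA]

theorem LR_word_conjugate_iff_cyclic_rotation
    (ℓ ℓ' : ℕ) (hℓ : 1 ≤ ℓ) (hℓ' : 1 ≤ ℓ')
    (m n : Fin ℓ → ℕ) (hm : ∀ i, 0 < m i) (hn : ∀ i, 0 < n i)
    (m' n' : Fin ℓ' → ℕ) (hm' : ∀ i, 0 < m' i) (hn' : ∀ i, 0 < n' i)
    (P : Matrix.SpecialLinearGroup (Fin 2) ℤ)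
    (hconj : (P : Matrix (Fin 2) (Fin 2) ℤ) *
        (List.ofFn fun i : Fin ℓ => ML ^ (m i) * MR ^ (n i)).prod *
        ((P⁻¹ : Matrix.SpecialLinearGroup (Fin 2) ℤ) : Matrix (Fin 2) (Fin 2) ℤ) =
        (List.ofFn fun i : Fin ℓ' => ML ^ (m' i) * MR ^ (n' i)).prod) :
    ℓ = ℓ' ∧ ∃ j < ℓ,
      List.ofFn (fun i : Fin ℓ' => (m' i, n' i)) =
        (List.ofFn (fun i : Fin ℓ => (m i, n i))).rotate j := by
  rw [prod_ofFn_eq_lrEval_lrWord, prod_ofFn_eq_lrEval_lrWord] at hconj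
  have hxs := posPairs_ofFn hm hn
  have hys := posPairs_ofFn hm' hn'
  set xs := List.ofFn fun i : Fin ℓ => (m i, n i)
  set ys := List.ofFn fun i : Fin ℓ' => (m' i, n' i)
  have hsemi : (P : Matrix (Fin 2) (Fin 2) ℤ) * lrEval (lrWord xs) = lrEval (lrWord ys) * P := by
    have hinv : ((P⁻¹ : SpecialLinearGroup (Fin 2) ℤ) : Matrix (Fin 2) (Fin 2) ℤ) * P = 1 :=
      congrArg Subtype.val (inv_mul_cancel P)
    rw [← hconj, mul_assoc _ _ (P : Matrix (Fin 2) (Fin 2) ℤ), hinv, mul_one]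
  obtain ⟨C, hC, hdetC, hCA⟩ := exists_nonneg_semiconj
    (lrEval_lrWord_pos hxs (by simp [xs]; omega)) (det_lrEval _)
    (lrEval_lrWord_pos hys (by simp [ys]; omega)) (det_lrEval _) P.2 hsemi
  obtain ⟨v, rfl⟩ := exists_lrEval_eq hC hdetC
  have hword : lrWord ys ++ v = v ++ lrWord xs :=
    lrEval_injective (by rw [lrEval_append, lrEval_append, hCA])
  have hrot : xs ~r ys := isRotated_of_lrWord_append_eq hxs hys hword
  have hlen : ℓ = ℓ' := by simpa [xs, ys] using hrot.perm.length_eq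
  obtain ⟨j, hj⟩ := hrot
  refine ⟨hlen, j % ℓ, Nat.mod_lt _ hℓ, ?_⟩
  rw [← hj, ← List.rotate_mod, List.length_ofFn]
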